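/- Every \alpha \in \Delta_0^+ satisfies exactly one of the following four conditions: (a) \alpha \in \Delta_0'^+, i.e. the coordinates of \alpha at 0, 1, and 5 all vanish; (b) \alpha + \sigma(\alpha) + \sigma^2(\alpha) \in \mathbb{Z}_{>0}\cdot\delta; (c) there exists \beta \in \Delta_0' with \sigma(\beta) \ne \beta such that \alpha + \sigma(\alpha) + \sigma^2(\alpha) = \delta + \beta + \sigma(\beta) + \sigma^2(\beta); (d) there exists \beta \in \Delta_0' with \sigma(\beta) \ne \beta such that \alpha + \sigma(\alpha) + \sigma^2(\alpha) = 2\delta + \beta + \sigma(\beta) + \sigma^2(\beta). -/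

import Mathlib

/-!
Statement 8: For the affine root system of type `E_6^{(1)}` with the admissible
order-3 diagram automorphism `σ` (`α_0 → α_5 → α_1 → α_0`, `α_6 → α_4 → α_2 → α_6`,
`α_3 → α_3`), every `α ∈ Δ₀⁺` satisfies exactly one of:
(a) `α ∈ Δ₀'⁺` (coordinates at `0`, `1`, `5` vanish);
(b) `α + σ(α) + σ²(α) ∈ ℤ_{>0}·δ`;
(c) `∃ β ∈ Δ₀'` with `σ(β) ≠ β` and `α + σ(α) + σ²(α) = δ + β + σ(β) + σ²(β)`;
(d) `∃ β ∈ Δ₀'` with `σ(β) ≠ β` and `α + σ(α) + σ²(α) = 2δ + β + σ(β) + σ²(β)`.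
-/

namespace Stmt8

/-- The root lattice `Q = ⨁_{i ∈ I} ℤ α_i` for `I = {0,1,…,6}`. -/
abbrev Q := Fin 7 → ℤ

/-- The edges of the Dynkin diagram of affine type `E_6^{(1)}`. -/
abbrev epair (i j : ℕ) : Prop :=
  (i = 1 ∧ j = 2) ∨ (i = 2 ∧ j = 3) ∨ (i = 3 ∧ j = 4) ∨ (i = 4 ∧ j = 5) ∨
  (i = 3 ∧ j = 6) ∨ (i = 0 ∧ j = 6)

abbrev edge (i j : ℕ) : Prop := epair i j ∨ epair j i

/-- The generalized Cartan matrix of type `E_6^{(1)}`. -/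
def CM (i j : Fin 7) : ℤ :=
  if i = j then 2 else if edge (i : ℕ) (j : ℕ) then -1 else 0

/-- The symmetric bilinear form `B` on `Q` determined by the Cartan matrix. -/
def B (v w : Q) : ℤ := ∑ i, ∑ j, v i * CM i j * w j

/-- The set of positive real roots. -/
def ΔrePos : Set Q := {v | (∀ i, 0 ≤ v i) ∧ B v v = 2}

/-- The set `Δ₀⁺` of positive roots of the finite root system of type `E_6`. -/
def Δ0Pos : Set Q := {v | v ∈ ΔrePos ∧ v 0 = 0}

/-- The primitive null root `δ`. -/
def δ : Q := ![1, 1, 2, 3, 2, 1, 2]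

/-- The admissible order-3 diagram automorphism `σ` (on coordinates,
`(σ v)_j = v_{p⁻¹(j)}`). -/
def σmap (v : Q) : Q := fun j => v (![1, 5, 4, 3, 6, 0, 2] j)

/-- The orbit sum `α + σ(α) + σ²(α)`. -/
def Osum (α : Q) : Q := α + σmap α + σmap (σmap α)

/-- The `σ`-stable subsystem `Δ₀'` of type `D_4` supported on `{2,3,4,6}`. -/
def Δ0' : Set Q := {v | B v v = 2 ∧ v 0 = 0 ∧ v 1 = 0 ∧ v 5 = 0}

/-- The positive part `Δ₀'⁺ = Δ₀' ∩ ℕ^I`. -/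
def Δ0'Pos : Set Q := {v | v ∈ Δ0' ∧ ∀ i, 0 ≤ v i}

/-!
The orbit sum `Osum α` only depends on the orbit coefficient sums
`fold α = (α₀ + α₁ + α₅, α₂ + α₄ + α₆, α₃)`, and its coordinate at `0` separates the four cases:
it is `0`, `m`, `1`, `2` in cases (a)–(d). Cases (b) and (c)/(d) could only meet if `Osum β = 0`
for some `β ∈ Δ₀'`, which parity rules out.

For existence, every root of `E₆` lies below the highest root `δ - α₀`, so `Δ₀⁺` is a finite
check. For `s = α₁ + α₅ > 0` it gives `s ≤ 2` and `fold α = s • (1, 2, 1) + fold β`, where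
`(1, 2, 1)` is the fold of any vector whose orbit sum is `δ`, and `β` is `0` or one of the roots
`±α₂, ±(α₂ + α₃), ±(α₂ + α₃ + α₄)` of `Δ₀'`, none of which is `σ`-fixed.
-/

lemma B_self (v : Q) : B v v =
    2 * (v 0 ^ 2 + v 1 ^ 2 + v 2 ^ 2 + v 3 ^ 2 + v 4 ^ 2 + v 5 ^ 2 + v 6 ^ 2)
      - 2 * (v 1 * v 2 + v 2 * v 3 + v 3 * v 4 + v 4 * v 5 + v 3 * v 6 + v 0 * v 6) := by
  simp only [B, CM, Fin.sum_univ_seven]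
  simp only [Fin.isValue, ↓reduceIte, zero_ne_one, edge, epair, Fin.coe_ofNat_eq_mod,
    Nat.zero_mod, Nat.one_mod, OfNat.one_ne_ofNat, and_self, OfNat.zero_ne_ofNat, and_false,
    or_self, one_ne_zero, mul_zero, zero_mul, add_zero, Fin.reduceEq, Nat.reduceMod, and_true,
    Nat.reduceEqDiff, OfNat.ofNat_ne_one, OfNat.ofNat_ne_zero, Nat.succ_ne_self, Nat.mod_succ,
    OfNat.ofNat_eq_ofNat, or_true, or_false, Int.reduceNeg, mul_neg, mul_one, neg_mul, zero_add]
  ring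

-- `v i ^ 2 ≤ B(v, v) B(ωᵢ, ωᵢ)` for the fundamental weight `ωᵢ` (Cauchy–Schwarz); each list of
-- hints completes the square of the `E₆` form towards the coordinate being bounded.
lemma le_highestRoot {v : Q} (h0 : v 0 = 0) (hv : B v v = 2) :
    v 1 ≤ 1 ∧ v 2 ≤ 2 ∧ v 3 ≤ 3 ∧ v 4 ≤ 2 ∧ v 5 ≤ 1 ∧ v 6 ≤ 2 := by
  rw [B_self, h0] at hv
  set a := v 1; set b := v 2; set c := v 3; set d := v 4; set e := v 5; set f := v 6
  refine ⟨?_, ?_, ?_, ?_, ?_, ?_⟩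
  · nlinarith [sq_nonneg (2*b-c-a), sq_nonneg (3*c-2*d-2*f-a), sq_nonneg (4*d-3*e-2*f-a),
      sq_nonneg (5*e-2*f-a), sq_nonneg (4*f-3*a)]
  · nlinarith [sq_nonneg (2*a-b), sq_nonneg (2*c-d-f-b), sq_nonneg (3*d-2*e-f-b),
      sq_nonneg (4*e-f-b), sq_nonneg (5*f-3*b)]
  · nlinarith [sq_nonneg (2*a-b), sq_nonneg (3*b-2*c), sq_nonneg (2*d-e-c),
      sq_nonneg (3*e-c), sq_nonneg (2*f-c)]
  · nlinarith [sq_nonneg (2*a-b), sq_nonneg (3*b-2*c), sq_nonneg (4*c-3*f-3*d),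
      sq_nonneg (2*e-d), sq_nonneg (5*f-3*d)]
  · nlinarith [sq_nonneg (2*a-b), sq_nonneg (3*b-2*c), sq_nonneg (4*c-3*d-3*f),
      sq_nonneg (5*d-3*f-4*e), sq_nonneg (4*f-3*e)]
  · nlinarith [sq_nonneg (2*a-b), sq_nonneg (3*b-2*c), sq_nonneg (4*c-3*d-3*f),
      sq_nonneg (5*d-4*e-3*f), sq_nonneg (2*e-f)]

def fold (v : Q) : ℤ × ℤ × ℤ := (v 0 + v 1 + v 5, v 2 + v 4 + v 6, v 3)

lemma Osum_eq_zsmul_δ_add_Osum_iff {α β : Q} {m : ℤ} :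
    Osum α = m • δ + Osum β ↔ fold α = m • (1, 2, 1) + fold β := by
  simp only [funext_iff, Fin.forall_fin_succ, Prod.ext_iff, fold, Osum,
    σmap, δ, Pi.add_apply, Pi.smul_apply, Prod.fst_add, Prod.snd_add, Prod.smul_fst,
    Prod.smul_snd, smul_eq_mul]
  simp only [Fin.isValue, Matrix.cons_val_zero, Matrix.cons_val_one, Matrix.cons_val,
    Fin.succ_zero_eq_one, Fin.succ_one_eq_two, Fin.reduceSucc, Matrix.cons_val_succ,
    Matrix.cons_val_fin_one, IsEmpty.forall_iff, and_true, mul_one]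
  omega

lemma Osum_eq_zsmul_δ_iff {α : Q} {m : ℤ} : Osum α = m • δ ↔ fold α = m • (1, 2, 1) := by
  simpa [fold, show Osum 0 = 0 from funext fun _ => rfl] using
    Osum_eq_zsmul_δ_add_Osum_iff (α := α) (β := 0) (m := m)

/-- The folds of the roots `α₂`, `α₂ + α₃`, `α₂ + α₃ + α₄` of `Δ₀'` and of their negatives. -/
def nonfixedFolds : List (ℤ × ℤ × ℤ) :=
  [(0, 1, 0), (0, 1, 1), (0, 2, 1), (0, -1, 0), (0, -1, -1), (0, -2, -1)]

lemma exists_mem_Δ0'_fold_eq {p : ℤ × ℤ × ℤ} (hp : p ∈ nonfixedFolds) :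
    ∃ β ∈ Δ0', σmap β ≠ β ∧ fold β = p := by
  simp only [nonfixedFolds, List.mem_cons, List.not_mem_nil, or_false] at hp
  rcases hp with rfl | rfl | rfl | rfl | rfl | rfl
  · exact ⟨![0, 0, 1, 0, 0, 0, 0], ⟨by decide, rfl, rfl, rfl⟩, by decide, rfl⟩
  · exact ⟨![0, 0, 1, 1, 0, 0, 0], ⟨by decide, rfl, rfl, rfl⟩, by decide, rfl⟩
  · exact ⟨![0, 0, 1, 1, 1, 0, 0], ⟨by decide, rfl, rfl, rfl⟩, by decide, rfl⟩
  · exact ⟨![0, 0, -1, 0, 0, 0, 0], ⟨by decide, rfl, rfl, rfl⟩, by decide, rfl⟩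
  · exact ⟨![0, 0, -1, -1, 0, 0, 0], ⟨by decide, rfl, rfl, rfl⟩, by decide, rfl⟩
  · exact ⟨![0, 0, -1, -1, -1, 0, 0], ⟨by decide, rfl, rfl, rfl⟩, by decide, rfl⟩

lemma fold_cases_of_bounded : ∀ a ∈ Finset.Icc (0 : ℤ) 1, ∀ b ∈ Finset.Icc (0 : ℤ) 2,
    ∀ c ∈ Finset.Icc (0 : ℤ) 3, ∀ d ∈ Finset.Icc (0 : ℤ) 2, ∀ e ∈ Finset.Icc (0 : ℤ) 1,
    ∀ f ∈ Finset.Icc (0 : ℤ) 2,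
    a ^ 2 + b ^ 2 + c ^ 2 + d ^ 2 + e ^ 2 + f ^ 2 = 1 + (a * b + b * c + c * d + d * e + c * f) →
      a + e = 0 ∨ ((a + e = 1 ∨ a + e = 2) ∧
        ((a + e, b + d + f, c) = (a + e) • (1, 2, 1) ∨
          (a + e, b + d + f, c) - (a + e) • (1, 2, 1) ∈ nonfixedFolds)) := by
  decide

lemma fold_cases_of_mem_Δ0Pos {α : Q} (hα : α ∈ Δ0Pos) :
    α 1 + α 5 = 0 ∨ ((α 1 + α 5 = 1 ∨ α 1 + α 5 = 2) ∧
      (fold α = (α 1 + α 5) • (1, 2, 1) ∨ fold α - (α 1 + α 5) • (1, 2, 1) ∈ nonfixedFolds)) := by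
  obtain ⟨⟨hnn, hB⟩, h0⟩ := hα
  obtain ⟨h1, h2, h3, h4, h5, h6⟩ := le_highestRoot h0 hB
  have hq := B_self α
  rw [hB, h0] at hq
  have hfold : fold α = (α 1 + α 5, α 2 + α 4 + α 6, α 3) := by simp [fold, h0]
  rw [hfold]
  exact fold_cases_of_bounded _ (by simp [hnn 1, h1]) _ (by simp [hnn 2, h2])
    _ (by simp [hnn 3, h3]) _ (by simp [hnn 4, h4]) _ (by simp [hnn 5, h5])
    _ (by simp [hnn 6, h6]) (by linarith)

lemma Osum_apply_zero (v : Q) : Osum v 0 = v 0 + v 1 + v 5 := rfl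

lemma Osum_ne_zero_of_mem_Δ0' {β : Q} (hβ : β ∈ Δ0') : Osum β ≠ 0 := by
  obtain ⟨hB, h0, h1, h5⟩ := hβ
  intro hz
  have hfold : fold β = 0 := by simpa using (Osum_eq_zsmul_δ_iff (m := 0)).1 (by simpa using hz)
  obtain ⟨-, h246, h3⟩ : _ ∧ β 2 + β 4 + β 6 = 0 ∧ β 3 = 0 := by simpa [fold] using hfold
  rw [B_self, h0, h1, h3, h5] at hB
  -- an odd sum of squares `β 2 ^ 2 + β 4 ^ 2 + β 6 ^ 2 = 1` against an even sum `β 2 + β 4 + β 6`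
  have hsq : 2 * (β 2 + β 4 + β 6) ^ 2 = 2 + 4 * (β 2 * β 4 + β 4 * β 6 + β 2 * β 6) := by
    linear_combination hB
  rw [h246] at hsq
  omega

lemma Osum_apply_zero_of_eq_add_Osum {α β x : Q} (hβ : β ∈ Δ0') (h : Osum α = x + Osum β) :
    Osum α 0 = x 0 := by
  obtain ⟨-, h0, h1, h5⟩ := hβ
  rw [h, Pi.add_apply, Osum_apply_zero, h0, h1, h5]
  simp

lemma Osum_ne_zsmul_δ_add_Osum {α β : Q} {m k : ℤ} (hβ : β ∈ Δ0') (hm : Osum α = m • δ) :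
    Osum α ≠ k • δ + Osum β := by
  intro hk
  have hmk : m = k := by
    simpa [hm, δ] using Osum_apply_zero_of_eq_add_Osum hβ hk
  rw [hm, hmk, left_eq_add] at hk
  exact Osum_ne_zero_of_mem_Δ0' hβ hk

theorem mem_Δ0'Pos_or_Osum_eq {α : Q} (hα : α ∈ Δ0Pos) :
    (α ∈ Δ0'Pos) ∨
      (∃ m : ℤ, 0 < m ∧ Osum α = m • δ) ∨
      (∃ β ∈ Δ0', σmap β ≠ β ∧ Osum α = δ + Osum β) ∨
      (∃ β ∈ Δ0', σmap β ≠ β ∧ Osum α = 2 • δ + Osum β) := by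
  obtain ⟨⟨hnn, hB⟩, h0⟩ := id hα
  rcases fold_cases_of_mem_Δ0Pos hα with hs | ⟨hs, hδ | hfold⟩
  · exact Or.inl ⟨⟨hB, h0, by linarith [hnn 1, hnn 5], by linarith [hnn 1, hnn 5]⟩, hnn⟩
  · exact Or.inr (Or.inl ⟨_, by omega, Osum_eq_zsmul_δ_iff.2 hδ⟩)
  · obtain ⟨β, hβ, hσ, hfβ⟩ := exists_mem_Δ0'_fold_eq hfold
    have hOsum := Osum_eq_zsmul_δ_add_Osum_iff.2 (eq_add_of_sub_eq' hfβ.symm)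
    rcases hs with hs | hs <;> rw [hs] at hOsum
    · exact Or.inr (Or.inr (Or.inl ⟨β, hβ, hσ, by simpa using hOsum⟩))
    · exact Or.inr (Or.inr (Or.inr ⟨β, hβ, hσ, by simpa [ofNat_zsmul] using hOsum⟩))

theorem statement8 : ∀ α ∈ Δ0Pos,
    ((α ∈ Δ0'Pos) ∨
      (∃ m : ℤ, 0 < m ∧ Osum α = m • δ) ∨
      (∃ β ∈ Δ0', σmap β ≠ β ∧ Osum α = δ + Osum β) ∨
      (∃ β ∈ Δ0', σmap β ≠ β ∧ Osum α = 2 • δ + Osum β)) ∧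
    ¬((α ∈ Δ0'Pos) ∧ (∃ m : ℤ, 0 < m ∧ Osum α = m • δ)) ∧
    ¬((α ∈ Δ0'Pos) ∧ (∃ β ∈ Δ0', σmap β ≠ β ∧ Osum α = δ + Osum β)) ∧
    ¬((α ∈ Δ0'Pos) ∧ (∃ β ∈ Δ0', σmap β ≠ β ∧ Osum α = 2 • δ + Osum β)) ∧
    ¬((∃ m : ℤ, 0 < m ∧ Osum α = m • δ) ∧
      (∃ β ∈ Δ0', σmap β ≠ β ∧ Osum α = δ + Osum β)) ∧
    ¬((∃ m : ℤ, 0 < m ∧ Osum α = m • δ) ∧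
      (∃ β ∈ Δ0', σmap β ≠ β ∧ Osum α = 2 • δ + Osum β)) ∧
    ¬((∃ β ∈ Δ0', σmap β ≠ β ∧ Osum α = δ + Osum β) ∧
      (∃ β ∈ Δ0', σmap β ≠ β ∧ Osum α = 2 • δ + Osum β)) := by
  intro α hα
  have level_a : α ∈ Δ0'Pos → Osum α 0 = 0 := fun ⟨⟨_, h0, h1, h5⟩, _⟩ => by
    rw [Osum_apply_zero, h0, h1, h5]; rfl
  have level_b : ∀ m : ℤ, Osum α = m • δ → Osum α 0 = m := fun m h => by simp [h, δ]
  have level_c : ∀ β ∈ Δ0', Osum α = δ + Osum β → Osum α 0 = 1 := fun β hβ h =>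
    Osum_apply_zero_of_eq_add_Osum hβ h
  have level_d : ∀ β ∈ Δ0', Osum α = 2 • δ + Osum β → Osum α 0 = 2 := fun β hβ h => by
    simpa [δ] using Osum_apply_zero_of_eq_add_Osum hβ h
  refine ⟨mem_Δ0'Pos_or_Osum_eq hα, ?_, ?_, ?_, ?_, ?_, ?_⟩
  · rintro ⟨ha, m, hm, hb⟩; linarith [level_a ha, level_b m hb]
  · rintro ⟨ha, β, hβ, -, hc⟩; linarith [level_a ha, level_c β hβ hc]
  · rintro ⟨ha, β, hβ, -, hd⟩; linarith [level_a ha, level_d β hβ hd]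
  · rintro ⟨⟨m, -, hb⟩, β, hβ, -, hc⟩
    exact Osum_ne_zsmul_δ_add_Osum (k := 1) hβ hb (by simpa using hc)
  · rintro ⟨⟨m, -, hb⟩, β, hβ, -, hd⟩
    exact Osum_ne_zsmul_δ_add_Osum (k := 2) hβ hb (by simpa [ofNat_zsmul] using hd)
  · rintro ⟨⟨β, hβ, -, hc⟩, γ, hγ, -, hd⟩; linarith [level_c β hβ hc, level_d γ hγ hd]

end Stmt8
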